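/- The control variate M^{(2)}_{Δ,T} := Σ_{j=1}^{J} Σ_{(U_1,U_2)∈𝒜} Σ_{o∈{1,2}^{U_1}} a_{j,o,U_1,U_2}(X_{Δ,(j−1)Δ}) ∏_{r∈U_1} H_{o_r}(ξ_j^r) ∏_{(k,l)∈U_2} V_j^{kl} satisfies Var[f(X_{Δ,T}) − M^{(2)}_{Δ,T}] = 0. -/

import Mathlib

open MeasureTheory ProbabilityTheory Finset

noncomputable section

/-- Map a boolean to `±1`. -/
def pm (b : Bool) : ℝ := if b then 1 else -1

/-- The index set `I_2 = {(k,l) : 1 ≤ k < l ≤ m}`. -/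
abbrev Upper (m : ℕ) := {p : Fin m × Fin m // p.1 < p.2}

/-- Law of a fair `±1` coin. -/
def coinLaw : Measure ℝ :=
  (1 / 2 : ENNReal) • Measure.dirac (1 : ℝ) + (1 / 2 : ENNReal) • Measure.dirac (-1 : ℝ)

/-- Law with `P(±√3) = 1/6`, `P(0) = 2/3`. -/
def xiLaw : Measure ℝ :=
  (1 / 6 : ENNReal) • Measure.dirac (Real.sqrt 3)
    + (1 / 6 : ENNReal) • Measure.dirac (-Real.sqrt 3)
    + (2 / 3 : ENNReal) • Measure.dirac (0 : ℝ)

/-- The three values `−√3, 0, √3`. -/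
def val3 : Fin 3 → ℝ := ![-Real.sqrt 3, 0, Real.sqrt 3]

/-- The normalized Hermite polynomial `H_2(x) = (x² − 1)/√2` (`H_1(x) = x`). -/
def H2 (t : ℝ) : ℝ := (t ^ 2 - 1) / Real.sqrt 2

/-- The antisymmetric matrix `z` built from upper-triangular `±1` entries, with
`z^{vu} = −z^{uv}` and `z^{uu} = −1`. -/
def zmat {m : ℕ} (b : Upper m → Bool) : Fin m → Fin m → ℝ := fun i l =>
  if h : i < l then pm (b ⟨(i, l), h⟩)
  else if h' : l < i then -pm (b ⟨(l, i), h'⟩)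
  else -1

/-- Backward recursion: `qB Φ f k = q_{J-k}`, i.e. `qB Φ f 0 = q_J = f` and
`q_{j-1}(x) = 2^{-m(m-1)/2} 6^{-m} Σ_y Σ_z 4^{#{i : yᵢ = 0}} q_j(Φ x y z)`. -/
def qB {d m : ℕ}
    (Φ : (Fin d → ℝ) → (Fin m → ℝ) → (Fin m → Fin m → ℝ) → Fin d → ℝ)
    (f : (Fin d → ℝ) → ℝ) : ℕ → (Fin d → ℝ) → ℝ
  | 0 => f
  | k + 1 => fun x =>
      ((2 : ℝ) ^ (m * (m - 1) / 2))⁻¹ * ((6 : ℝ) ^ m)⁻¹ *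
        ∑ y : Fin m → Fin 3, ∑ b : Upper m → Bool,
          (4 : ℝ) ^ ((Finset.univ.filter fun i => y i = 1).card) *
            qB Φ f k (Φ x (fun i => val3 (y i)) (zmat b))

/-- Coefficient `a_{j,o,U_1,U_2}` with `k = J - j`, where `o ∈ {1,2}^{U_1}` is encoded
by the subset `K_2 = {r ∈ U_1 : o_r = 2} ⊆ U_1` (so `𝒦_1 = U_1 \ K_2`):
`a(x) = 2^{-m(m-1)/2} 6^{-m} Σ_y Σ_z 4^{#{i : yᵢ = 0}} (Π_{r∈U_1} H_{o_r}(y^r))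
(Π_{(k,l)∈U_2} z^{kl}) q_j(Φ x y z)`. -/
def aB {d m : ℕ}
    (Φ : (Fin d → ℝ) → (Fin m → ℝ) → (Fin m → Fin m → ℝ) → Fin d → ℝ)
    (f : (Fin d → ℝ) → ℝ) (k : ℕ)
    (U1 K2 : Finset (Fin m)) (U2 : Finset (Upper m)) (x : Fin d → ℝ) : ℝ :=
  ((2 : ℝ) ^ (m * (m - 1) / 2))⁻¹ * ((6 : ℝ) ^ m)⁻¹ *
    ∑ y : Fin m → Fin 3, ∑ b : Upper m → Bool,
      (4 : ℝ) ^ ((Finset.univ.filter fun i => y i = 1).card) *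
        ((∏ r ∈ U1 \ K2, val3 (y r)) * (∏ r ∈ K2, H2 (val3 (y r))) *
          (∏ p ∈ U2, pm (b p)) * qB Φ f k (Φ x (fun i => val3 (y i)) (zmat b)))

/-- The second order discretisation scheme `X_{Δ,0} = x_0`,
`X_{Δ,jΔ} = Φ_Δ(X_{Δ,(j-1)Δ}, ξ_j, V_j)`. -/
def XB {d m : ℕ} {Ω : Type*}
    (Φ : (Fin d → ℝ) → (Fin m → ℝ) → (Fin m → Fin m → ℝ) → Fin d → ℝ)
    (x0 : Fin d → ℝ) (ξ : ℕ → Ω → Fin m → ℝ)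
    (V : ℕ → Ω → Fin m → Fin m → ℝ) : ℕ → Ω → Fin d → ℝ
  | 0 => fun _ => x0
  | j + 1 => fun ω => Φ (XB Φ x0 ξ V j ω) (ξ (j + 1) ω) (V (j + 1) ω)

/-- All scalar noise coordinates `ξ_j^i` and `V_j^{il}` (`i < l`) as one family. -/
def noiseB {m : ℕ} {Ω : Type*} (ξ : ℕ → Ω → Fin m → ℝ)
    (V : ℕ → Ω → Fin m → Fin m → ℝ) : ℕ × (Fin m ⊕ Upper m) → Ω → ℝ :=
  fun p ω =>
    match p.2 with
    | Sum.inl i => ξ p.1 ω i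
    | Sum.inr u => V p.1 ω u.1.1 u.1.2

/-!
Almost surely `(ξ_j, V_j)` lies in a finite grid, and on that grid the functions
`∏_{r ∈ U_1} H_{o_r}(y^r) ∏_{(k,l) ∈ U_2} z^{kl}` (the constant `1` included) form an
orthonormal basis for the law of `(ξ_j, V_j)`. Completeness is seen on the reproducing kernel
`Σ e(p') e(p)`: it factorises into the one-dimensional kernels `1 + y y' + H_2(y) H_2(y')` and
`1 + z z'`, each of which is `δ_{p' p} / P(p)`. So every function on the grid equals its Hermite
expansion pointwise. For `q_j(Φ_Δ(x, ·, ·))` the constant coefficient is `q_{j-1}(x)` and the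
other coefficients are the `a_{j,o,U_1,U_2}(x)`, so the `j`-th summand of `M^{(2)}_{Δ,T}` equals
`q_j(X_{Δ,jΔ}) - q_{j-1}(X_{Δ,(j-1)Δ})` on every path. The sum telescopes:
`f(X_{Δ,T}) - M^{(2)}_{Δ,T} = q_0(x_0)` almost surely, a constant.
-/

theorem sum_coeff_mul_eq_of_kernel {ι α R : Type*} [Fintype α] [DecidableEq α]
    [CommSemiring R] (s : Finset ι) (w : α → R) (e : ι → α → R)
    (hker : ∀ y' y, w y' * ∑ i ∈ s, e i y' * e i y = if y' = y then 1 else 0)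
    (G : α → R) (y : α) :
    ∑ i ∈ s, (∑ y', w y' * e i y' * G y') * e i y = G y :=
  calc ∑ i ∈ s, (∑ y', w y' * e i y' * G y') * e i y
      = ∑ y', G y' * (w y' * ∑ i ∈ s, e i y' * e i y) := by
        simp only [sum_mul, mul_sum]
        rw [sum_comm]
        exact sum_congr rfl fun _ _ => sum_congr rfl fun _ _ => by ring
    _ = G y := by simp [hker]

theorem Finset.sum_sum_powerset_prod_sdiff_mul_prod {α R : Type*} [Fintype α] [DecidableEq α]
    [CommSemiring R] (v h : α → R) :
    ∑ U : Finset α, ∑ K ∈ U.powerset, (∏ r ∈ U \ K, v r) * ∏ r ∈ K, h r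
      = ∏ i, (1 + v i + h i) := by
  simp_rw [show ∀ i, 1 + v i + h i = (h i + v i) + 1 from fun i => by ring]
  rw [prod_add, ← powerset_univ]
  refine sum_congr rfl fun U _ => ?_
  rw [prod_const_one, mul_one, prod_add]
  exact sum_congr rfl fun K _ => mul_comm _ _

theorem Finset.sum_sum_filter_nonempty_or {α β M : Type*} [Fintype α] [Fintype β]
    [AddCommGroup M] (g : Finset α → Finset β → M) :
    ∑ U : Finset α, ∑ W ∈ univ.filter (fun W => U.Nonempty ∨ W.Nonempty), g U W
      = ∑ U, ∑ W, g U W - g ∅ ∅ := by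
  classical
  rw [eq_sub_iff_add_eq]
  have hempty : g ∅ ∅ = ∑ U, ∑ W, if U = ∅ ∧ W = ∅ then g U W else 0 := by
    simp [ite_and]
  rw [hempty]
  simp only [sum_filter, ← sum_add_distrib]
  refine sum_congr rfl fun U _ => sum_congr rfl fun W _ => ?_
  by_cases hU : U = ∅ <;> by_cases hW : W = ∅ <;> simp [hU, hW, nonempty_iff_ne_empty]

theorem Finset.sum_Icc_sub_pred {M : Type*} [AddCommGroup M] (g : ℕ → M) (n : ℕ) :
    ∑ j ∈ Icc 1 n, (g j - g (j - 1)) = g n - g 0 := by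
  induction n with
  | zero => simp
  | succ n ih =>
    rw [sum_Icc_succ_top (by omega), ih]
    simp

theorem variance_eq_zero_of_ae_eq_const {Ω : Type*} [MeasurableSpace Ω] {P : Measure Ω}
    [IsProbabilityMeasure P] {X : Ω → ℝ} {c : ℝ} (h : X =ᵐ[P] fun _ => c) :
    variance X P = 0 := by
  rw [variance_congr h]
  simpa using (variance_const_add (μ := P) (X := fun _ => 0) aestronglyMeasurable_const c).trans
    (variance_zero P)

theorem ae_of_map_eq {α β : Type*} [MeasurableSpace α] [MeasurableSpace β] {μ : Measure α}
    {ν : Measure β} {g : α → β} (hg : μ.map g = ν) (hν : ν ≠ 0) {p : β → Prop}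
    (hp : ∀ᵐ y ∂ν, p y) : ∀ᵐ x ∂μ, p (g x) :=
  ae_of_ae_map (.of_map_ne_zero (hg ▸ hν)) (hg ▸ hp)

theorem xiLaw_ne_zero : xiLaw ≠ 0 := fun h => by
  simpa [xiLaw] using congrArg (fun μ : Measure ℝ => μ Set.univ) h

theorem coinLaw_ne_zero : coinLaw ≠ 0 := fun h => by
  simpa [coinLaw] using congrArg (fun μ : Measure ℝ => μ Set.univ) h

theorem ae_xiLaw_mem_range_val3 : ∀ᵐ t ∂xiLaw, t ∈ Set.range val3 := by
  simp [xiLaw, ae_dirac_eq, val3]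

theorem ae_coinLaw_mem_range_pm : ∀ᵐ t ∂coinLaw, t ∈ Set.range pm := by
  simp [coinLaw, ae_dirac_eq, pm]

theorem card_upper (m : ℕ) : Fintype.card (Upper m) = m * (m - 1) / 2 := by
  rw [Fintype.card_subtype, Fintype.card_product_filter_lt, Fintype.card_fin,
    Nat.choose_two_right]

@[simp]
theorem zmat_upper {m : ℕ} (b : Upper m → Bool) (q : Upper m) :
    zmat b q.1.1 q.1.2 = pm (b q) := by
  simp [zmat, q.2]

theorem zmat_eq {m : ℕ} {A : Fin m → Fin m → ℝ} {b : Upper m → Bool}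
    (hanti : ∀ i l, i < l → A l i = -A i l) (hdiag : ∀ i, A i i = -1)
    (hb : ∀ q : Upper m, A q.1.1 q.1.2 = pm (b q)) : zmat b = A := by
  ext i l
  rcases lt_trichotomy i l with h | rfl | h
  · simp [zmat, h, ← hb ⟨(i, l), h⟩]
  · simp [zmat, hdiag]
  · simp [zmat, h, h.not_gt, hanti l i h, ← hb ⟨(l, i), h⟩]

/-- `xiProb a = P(ξ^i = val3 a)`. -/
def xiProb : Fin 3 → ℝ := ![1 / 6, 2 / 3, 1 / 6]

theorem xiProb_mul_kernel (a a' : Fin 3) :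
    xiProb a * (1 + val3 a * val3 a' + H2 (val3 a) * H2 (val3 a'))
      = if a = a' then 1 else 0 := by
  have h3 : Real.sqrt 3 ^ 2 = 3 := Real.sq_sqrt (by norm_num)
  have h2 : Real.sqrt 2 ^ 2 = 2 := Real.sq_sqrt (by norm_num)
  have h2ne : Real.sqrt 2 ≠ 0 := by positivity
  fin_cases a <;> fin_cases a' <;> simp [xiProb, val3, H2] <;> field_simp <;> nlinarith

theorem half_mul_coin_kernel (s s' : Bool) :
    1 / 2 * (1 + pm s * pm s') = if s = s' then 1 else 0 := by
  cases s <;> cases s' <;> norm_num [pm]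

/-- `(y, b)` encodes the value `(val3 ∘ y, zmat b)` of `(ξ_j, V_j)`. -/
abbrev NoiseGrid (m : ℕ) := (Fin m → Fin 3) × (Upper m → Bool)

def noiseWeight {m : ℕ} (p : NoiseGrid m) : ℝ :=
  (∏ i, xiProb (p.1 i)) * ∏ _q : Upper m, 1 / 2

def hermiteBasis {m : ℕ} (U1 K2 : Finset (Fin m)) (U2 : Finset (Upper m)) (p : NoiseGrid m) :
    ℝ :=
  (∏ r ∈ U1 \ K2, val3 (p.1 r)) * (∏ r ∈ K2, H2 (val3 (p.1 r))) * ∏ q ∈ U2, pm (p.2 q)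

theorem noiseWeight_eq {m : ℕ} (p : NoiseGrid m) :
    noiseWeight p = ((2 : ℝ) ^ (m * (m - 1) / 2))⁻¹ * ((6 : ℝ) ^ m)⁻¹ *
      (4 : ℝ) ^ ((univ.filter fun i => p.1 i = 1).card) := by
  have hxi : ∀ a : Fin 3, xiProb a = (6 : ℝ)⁻¹ * if a = 1 then 4 else 1 := by
    intro a; fin_cases a <;> norm_num [xiProb]
  simp only [noiseWeight, hxi, prod_mul_distrib, prod_const, card_univ, card_upper,
    Fintype.card_fin, ← prod_filter]
  rw [one_div, inv_pow, inv_pow]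
  ring

theorem sum_hermiteBasis_mul {m : ℕ} (p' p : NoiseGrid m) :
    ∑ U1 : Finset (Fin m), ∑ U2 : Finset (Upper m), ∑ K2 ∈ U1.powerset,
      hermiteBasis U1 K2 U2 p' * hermiteBasis U1 K2 U2 p
      = (∏ i, (1 + val3 (p'.1 i) * val3 (p.1 i) + H2 (val3 (p'.1 i)) * H2 (val3 (p.1 i)))) *
        ∏ q, (1 + pm (p'.2 q) * pm (p.2 q)) := by
  rw [← sum_sum_powerset_prod_sdiff_mul_prod (fun i => val3 (p'.1 i) * val3 (p.1 i))
    (fun i => H2 (val3 (p'.1 i)) * H2 (val3 (p.1 i))), prod_one_add, powerset_univ, sum_mul]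
  refine sum_congr rfl fun U1 _ => ?_
  simp only [sum_mul, mul_sum]
  refine sum_congr rfl fun U2 _ => sum_congr rfl fun K2 _ => ?_
  simp only [hermiteBasis, prod_mul_distrib]
  ring

theorem noiseWeight_mul_sum_hermiteBasis_mul {m : ℕ} (p' p : NoiseGrid m) :
    noiseWeight p' * ∑ U1 : Finset (Fin m), ∑ U2 : Finset (Upper m), ∑ K2 ∈ U1.powerset,
      hermiteBasis U1 K2 U2 p' * hermiteBasis U1 K2 U2 p = if p' = p then 1 else 0 := by
  rw [sum_hermiteBasis_mul, noiseWeight,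
    show ∀ a b c d : ℝ, a * b * (c * d) = (a * c) * (b * d) from fun _ _ _ _ => by ring,
    ← prod_mul_distrib, ← prod_mul_distrib]
  simp only [xiProb_mul_kernel, half_mul_coin_kernel, prod_boole, mem_univ, true_imp_iff,
    ite_zero_mul_ite_zero, mul_one]
  simp [Prod.ext_iff, funext_iff]

theorem hermiteBasis_expansion {m : ℕ} (G : NoiseGrid m → ℝ) (p : NoiseGrid m) :
    ∑ U1 : Finset (Fin m), ∑ U2 : Finset (Upper m), ∑ K2 ∈ U1.powerset,
      (∑ p', noiseWeight p' * hermiteBasis U1 K2 U2 p' * G p') * hermiteBasis U1 K2 U2 p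
      = G p := by
  have hsigma : ∀ F : (Σ _ : Finset (Fin m) × Finset (Upper m), Finset (Fin m)) → ℝ,
      ∑ i ∈ (univ : Finset (Finset (Fin m) × Finset (Upper m))).sigma (·.1.powerset), F i
        = ∑ U1, ∑ U2, ∑ K2 ∈ U1.powerset, F ⟨(U1, U2), K2⟩ := fun F => by
    rw [sum_sigma, ← univ_product_univ, sum_product]
  have := sum_coeff_mul_eq_of_kernel
    ((univ : Finset (Finset (Fin m) × Finset (Upper m))).sigma (·.1.powerset)) noiseWeight
    (fun i => hermiteBasis i.1.1 i.2 i.1.2)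
    (fun p' p => by rw [hsigma]; exact noiseWeight_mul_sum_hermiteBasis_mul p' p) G p
  rwa [hsigma] at this

section Scheme

variable {d m : ℕ}
  (Φ : (Fin d → ℝ) → (Fin m → ℝ) → (Fin m → Fin m → ℝ) → Fin d → ℝ)
  (f : (Fin d → ℝ) → ℝ)

theorem aB_eq_sum (k : ℕ) (U1 K2 : Finset (Fin m)) (U2 : Finset (Upper m)) (x : Fin d → ℝ) :
    aB Φ f k U1 K2 U2 x = ∑ p : NoiseGrid m, noiseWeight p * hermiteBasis U1 K2 U2 p *
      qB Φ f k (Φ x (fun i => val3 (p.1 i)) (zmat p.2)) := by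
  rw [aB, Fintype.sum_prod_type, mul_sum]
  refine sum_congr rfl fun y _ => ?_
  rw [mul_sum]
  refine sum_congr rfl fun b _ => ?_
  rw [noiseWeight_eq, hermiteBasis]
  ring

theorem qB_succ_eq_aB_empty (k : ℕ) (x : Fin d → ℝ) :
    qB Φ f (k + 1) x = aB Φ f k ∅ ∅ ∅ x := by
  simp [aB, qB]

/-- The `j`-th summand of `M^{(2)}_{Δ,T}` is
`controlIncrement Φ f (J - j) X_{Δ,(j-1)Δ} ξ_j V_j`. -/
def controlIncrement (k : ℕ) (x : Fin d → ℝ) (xi : Fin m → ℝ)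
    (A : Fin m → Fin m → ℝ) : ℝ :=
  ∑ U1 : Finset (Fin m), ∑ U2 ∈ (univ : Finset (Finset (Upper m))).filter
      (fun U2 => U1.Nonempty ∨ U2.Nonempty), ∑ K2 ∈ U1.powerset,
    aB Φ f k U1 K2 U2 x * (∏ r ∈ U1 \ K2, xi r) * (∏ r ∈ K2, H2 (xi r)) *
      ∏ p ∈ U2, A p.1.1 p.1.2

theorem controlIncrement_val3_zmat (k : ℕ) (x : Fin d → ℝ) (y : Fin m → Fin 3)
    (b : Upper m → Bool) :
    controlIncrement Φ f k x (fun i => val3 (y i)) (zmat b)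
      = qB Φ f k (Φ x (fun i => val3 (y i)) (zmat b)) - qB Φ f (k + 1) x := by
  rw [controlIncrement, sum_sum_filter_nonempty_or, qB_succ_eq_aB_empty, ← hermiteBasis_expansion
    (fun p => qB Φ f k (Φ x (fun i => val3 (p.1 i)) (zmat p.2))) (y, b)]
  simp only [← aB_eq_sum]
  simp only [zmat_upper, hermiteBasis, powerset_empty, sum_singleton]
  simp [mul_assoc]

end Scheme

theorem ae_forall_exists_val3_zmat {Ω : Type*} [MeasurableSpace Ω] {P : Measure Ω} {m : ℕ}
    {ξ : ℕ → Ω → Fin m → ℝ} {V : ℕ → Ω → Fin m → Fin m → ℝ}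
    (hξdist : ∀ j i, Measure.map (fun ω => ξ j ω i) P = xiLaw)
    (hVdist : ∀ j (u : Upper m), Measure.map (fun ω => V j ω u.1.1 u.1.2) P = coinLaw)
    (hVanti : ∀ j ω i l, i < l → V j ω l i = -V j ω i l)
    (hVdiag : ∀ j ω i, V j ω i i = -1) :
    ∀ᵐ ω ∂P, ∀ j, ∃ (y : Fin m → Fin 3) (b : Upper m → Bool),
      ξ j ω = (fun i => val3 (y i)) ∧ V j ω = zmat b := by
  have hξ : ∀ᵐ ω ∂P, ∀ j i, ξ j ω i ∈ Set.range val3 := by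
    simp only [ae_all_iff]
    exact fun j i => ae_of_map_eq (hξdist j i) xiLaw_ne_zero ae_xiLaw_mem_range_val3
  have hV : ∀ᵐ ω ∂P, ∀ j (q : Upper m), V j ω q.1.1 q.1.2 ∈ Set.range pm := by
    simp only [ae_all_iff]
    exact fun j q => ae_of_map_eq (hVdist j q) coinLaw_ne_zero ae_coinLaw_mem_range_pm
  filter_upwards [hξ, hV] with ω hξω hVω j
  choose y hy using hξω j
  choose b hb using hVω j
  exact ⟨y, b, funext fun i => (hy i).symm,
    (zmat_eq (hVanti j ω) (hVdiag j ω) fun q => (hb q).symm).symm⟩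

theorem stmt5_general
    {d m : ℕ} (x0 : Fin d → ℝ) (J : ℕ)
    {Ω : Type*} [MeasurableSpace Ω] (P : Measure Ω) [IsProbabilityMeasure P]
    (ξ : ℕ → Ω → Fin m → ℝ) (V : ℕ → Ω → Fin m → Fin m → ℝ)
    (hξdist : ∀ j i, Measure.map (fun ω => ξ j ω i) P = xiLaw)
    (hVdist : ∀ j (u : Upper m),
      Measure.map (fun ω => V j ω u.1.1 u.1.2) P = coinLaw)
    (hVanti : ∀ j ω i l, i < l → V j ω l i = -V j ω i l)
    (hVdiag : ∀ j ω i, V j ω i i = -1)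
    (Φ : (Fin d → ℝ) → (Fin m → ℝ) → (Fin m → Fin m → ℝ) → Fin d → ℝ)
    (f : (Fin d → ℝ) → ℝ) :
    variance
      (fun ω => f (XB Φ x0 ξ V J ω)
        - ∑ j ∈ Finset.Icc 1 J, ∑ U1 : Finset (Fin m),
            ∑ U2 ∈ (Finset.univ : Finset (Finset (Upper m))).filter
                (fun U2 => U1.Nonempty ∨ U2.Nonempty),
              ∑ K2 ∈ U1.powerset,
                aB Φ f (J - j) U1 K2 U2 (XB Φ x0 ξ V (j - 1) ω)
                  * (∏ r ∈ U1 \ K2, ξ j ω r) * (∏ r ∈ K2, H2 (ξ j ω r))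
                  * ∏ p ∈ U2, V j ω p.1.1 p.1.2) P = 0 := by
  change variance (fun ω => f (XB Φ x0 ξ V J ω) - ∑ j ∈ Icc 1 J,
    controlIncrement Φ f (J - j) (XB Φ x0 ξ V (j - 1) ω) (ξ j ω) (V j ω)) P = 0
  refine variance_eq_zero_of_ae_eq_const (c := qB Φ f J x0) ?_
  filter_upwards [ae_forall_exists_val3_zmat hξdist hVdist hVanti hVdiag] with ω hω
  have hstep : ∀ j ∈ Icc 1 J,
      controlIncrement Φ f (J - j) (XB Φ x0 ξ V (j - 1) ω) (ξ j ω) (V j ω)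
        = qB Φ f (J - j) (XB Φ x0 ξ V j ω)
          - qB Φ f (J - (j - 1)) (XB Φ x0 ξ V (j - 1) ω) := by
    intro j hj
    obtain ⟨j, rfl⟩ : ∃ i, j = i + 1 := ⟨j - 1, by grind⟩
    obtain ⟨y, b, hy, hb⟩ := hω (j + 1)
    simp only [Nat.add_sub_cancel, XB, hy, hb]
    rw [show J - j = J - (j + 1) + 1 by grind]
    exact controlIncrement_val3_zmat Φ f _ _ y b
  rw [sum_congr rfl hstep, sum_Icc_sub_pred (fun j => qB Φ f (J - j) (XB Φ x0 ξ V j ω))]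
  simp [qB, XB]

/-- The control variate
`M^{(2)}_{Δ,T} = Σ_{j=1}^J Σ_{(U_1,U_2)∈𝒜} Σ_{o∈{1,2}^{U_1}}
a_{j,o,U_1,U_2}(X_{Δ,(j-1)Δ}) Π_{r∈U_1} H_{o_r}(ξ_j^r) Π_{(k,l)∈U_2} V_j^{kl}`
(with `o` encoded by `K_2 ⊆ U_1`) satisfies `Var[f(X_{Δ,T}) − M^{(2)}_{Δ,T}] = 0`. -/
theorem stmt5
    {d m : ℕ} (T : ℝ) (hT : 0 < T) (x0 : Fin d → ℝ) (J : ℕ) (hJ : 1 ≤ J)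
    {Ω : Type*} [MeasurableSpace Ω] (P : Measure Ω) [IsProbabilityMeasure P]
    (ξ : ℕ → Ω → Fin m → ℝ) (V : ℕ → Ω → Fin m → Fin m → ℝ)
    (hξmeas : ∀ j, Measurable (ξ j)) (hVmeas : ∀ j, Measurable (V j))
    (hindep : iIndepFun (noiseB ξ V) P)
    (hξdist : ∀ j i, Measure.map (fun ω => ξ j ω i) P = xiLaw)
    (hVdist : ∀ j (u : Upper m),
      Measure.map (fun ω => V j ω u.1.1 u.1.2) P = coinLaw)
    (hVanti : ∀ j ω i l, i < l → V j ω l i = -V j ω i l)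
    (hVdiag : ∀ j ω i, V j ω i i = -1)
    (Φ : (Fin d → ℝ) → (Fin m → ℝ) → (Fin m → Fin m → ℝ) → Fin d → ℝ)
    (hΦ : Measurable fun p : (Fin d → ℝ) × (Fin m → ℝ) × (Fin m → Fin m → ℝ) =>
      Φ p.1 p.2.1 p.2.2)
    (f : (Fin d → ℝ) → ℝ) (hf : Measurable f) :
    variance
      (fun ω => f (XB Φ x0 ξ V J ω)
        - ∑ j ∈ Finset.Icc 1 J, ∑ U1 : Finset (Fin m),
            ∑ U2 ∈ (Finset.univ : Finset (Finset (Upper m))).filter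
                (fun U2 => U1.Nonempty ∨ U2.Nonempty),
              ∑ K2 ∈ U1.powerset,
                aB Φ f (J - j) U1 K2 U2 (XB Φ x0 ξ V (j - 1) ω)
                  * (∏ r ∈ U1 \ K2, ξ j ω r) * (∏ r ∈ K2, H2 (ξ j ω r))
                  * ∏ p ∈ U2, V j ω p.1.1 p.1.2) P = 0 :=
  stmt5_general x0 J P ξ V hξdist hVdist hVanti hVdiag Φ f

end
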